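/- arXiv:2106.00968 — 8 statements merged into one kernel-verified Lean document; each statement's English description precedes it below -/
import Mathlib

section
/- Let H be a commutative BF-monoid. If 𝒰_2(H) = ℕ_{≥2}, then 𝒰_k(H) = ℕ_{≥2} for all integers k ≥ 2. -/
/-- The set of lengths of an element `a` of a commutative monoid. -/
def lengths {M : Type*} [CommMonoid M] (a : M) : Set ℕ :=
  {n | ∃ l : Multiset M, Multiset.card l = n ∧ (∀ x ∈ l, Irreducible x) ∧ Associated l.prod a}

/-- The union of all sets of lengths containing `k`. -/
def unionLengths (M : Type*) [CommMonoid M] (k : ℕ) : Set ℕ :=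
  {n | ∃ a : M, k ∈ lengths a ∧ n ∈ lengths a}

lemma lengths_add {M : Type*} [CommMonoid M] {a b : M} {m n : ℕ}
    (ha : m ∈ lengths a) (hb : n ∈ lengths b) : m + n ∈ lengths (a * b) := by
  obtain ⟨l₁, hc₁, hi₁, hp₁⟩ := ha
  obtain ⟨l₂, hc₂, hi₂, hp₂⟩ := hb
  exact ⟨l₁ + l₂, by simp [hc₁, hc₂],
    fun x hx => (Multiset.mem_add.1 hx).elim (hi₁ x) (hi₂ x),
    by rw [Multiset.prod_add]; exact hp₁.mul_mul hp₂⟩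

lemma two_le_of_mem {M : Type*} [CommMonoid M] {a : M} {m n : ℕ}
    (hm : m ∈ lengths a) (h2m : 2 ≤ m) (hn : n ∈ lengths a) : 2 ≤ n := by
  by_contra h
  push_neg at h
  obtain ⟨l, hc, hi, hp⟩ := hm
  obtain ⟨l', hc', hi', hp'⟩ := hn
  have hcard : 2 ≤ Multiset.card l := hc ▸ h2m
  obtain ⟨x, t, rfl⟩ : ∃ x t, l = x ::ₘ t := by
    obtain ⟨x, hx⟩ := Multiset.exists_mem_of_ne_zero
      (s := l) (by rintro rfl; simp at hcard)
    exact ⟨x, Multiset.exists_cons_of_mem hx⟩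
  obtain ⟨y, s, rfl⟩ : ∃ y s, t = y ::ₘ s := by
    obtain ⟨y, hy⟩ := Multiset.exists_mem_of_ne_zero
      (s := t) (by rintro rfl; simp at hcard)
    exact ⟨y, Multiset.exists_cons_of_mem hy⟩
  have hxirr : Irreducible x := hi x (by simp)
  have hyirr : Irreducible y := hi y (by simp)
  interval_cases n
  · have hl' : l' = 0 := Multiset.card_eq_zero.mp hc'
    subst hl'
    simp only [Multiset.prod_zero] at hp'
    have hunit : IsUnit (x ::ₘ y ::ₘ s).prod :=
      (hp.trans hp'.symm).isUnit_iff.mpr isUnit_one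
    rw [Multiset.prod_cons] at hunit
    exact hxirr.not_isUnit (isUnit_of_mul_isUnit_left hunit)
  · obtain ⟨p, rfl⟩ := Multiset.card_eq_one.mp hc'
    simp only [Multiset.prod_singleton] at hp'
    have hpirr : Irreducible p := hi' p (by simp)
    obtain ⟨u, hu⟩ := hp.trans hp'.symm
    have heq : p = x * (y * s.prod * u) := by
      rw [← hu, Multiset.prod_cons, Multiset.prod_cons, mul_assoc]
    rcases hpirr.isUnit_or_isUnit heq with h1 | h2
    · exact hxirr.not_isUnit h1
    · exact hyirr.not_isUnit (isUnit_of_mul_isUnit_left (isUnit_of_mul_isUnit_left h2))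

/-- For a commutative BF-monoid: if `𝒰_2(H) = ℕ_{≥2}` then `𝒰_k(H) = ℕ_{≥2}` for all `k ≥ 2`. -/
theorem unionLengths_eq_of_two {M : Type*} [CommMonoid M]
    (hUC : ∀ a u : M, a = a * u → IsUnit u)
    (hBF : ∀ a : M, (lengths a).Finite ∧ (lengths a).Nonempty)
    (h2 : unionLengths M 2 = {n : ℕ | 2 ≤ n}) :
    ∀ k : ℕ, 2 ≤ k → unionLengths M k = {n : ℕ | 2 ≤ n} := by
  -- there exists an irreducible element
  have h22 : (2 : ℕ) ∈ unionLengths M 2 := by rw [h2]; exact le_refl 2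
  obtain ⟨a₀, ha₀, -⟩ := h22
  obtain ⟨l₀, hc₀, hi₀, -⟩ := ha₀
  obtain ⟨p, hpl⟩ := Multiset.exists_mem_of_ne_zero
    (s := l₀) (by rintro rfl; simp at hc₀)
  have hp1 : (1 : ℕ) ∈ lengths p :=
    ⟨{p}, by simp, by simpa using hi₀ p hpl, by simpa using Associated.refl p⟩
  have key : ∀ k : ℕ, 2 ≤ k → ∀ n : ℕ, 2 ≤ n → n ∈ unionLengths M k := by
    intro k hk
    induction k, hk using Nat.le_induction with
    | base => intro n hn; rw [h2]; exact hn
    | succ k hk ih =>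
      intro n hn
      rcases eq_or_lt_of_le hn with rfl | hn3
      · have : k + 1 ∈ unionLengths M 2 := by rw [h2]; exact le_trans hk (Nat.le_succ k)
        obtain ⟨a, h2a, hka⟩ := this
        exact ⟨a, hka, h2a⟩
      · obtain ⟨a, hka, hna⟩ := ih (n - 1) (by omega)
        refine ⟨a * p, lengths_add hka hp1, ?_⟩
        have : n - 1 + 1 = n := by omega
        exact this ▸ lengths_add hna hp1
  intro k hk
  ext n
  simp only [Set.mem_setOf_eq]
  constructor
  · rintro ⟨a, hka, hna⟩
    exact two_le_of_mem hka hk hna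
  · exact key k hk n
end

section
/- Let R be a commutative domain and X₁, X₂ nonzero elements of R. Then for all positive integers k and ℓ with k ≥ ℓ − 1, the product of the ideals ⟨X₁, X₂⟩^k and ⟨X₁^ℓ, X₂^ℓ⟩ equals ⟨X₁, X₂⟩^{k+ℓ}. -/
lemma ideal_nat_cast_eq_top {R : Type*} [CommSemiring R] :
    ∀ {m : ℕ}, 0 < m → ((m : Ideal R)) = ⊤ := by
  intro m hm
  obtain ⟨j, rfl⟩ := Nat.exists_eq_succ_of_ne_zero hm.ne'
  rw [eq_top_iff, Nat.cast_succ, Ideal.add_eq_sup, ← Ideal.one_eq_top]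
  exact le_sup_right

lemma sup_pow_eq_sum {R : Type*} [CommSemiring R] (I J : Ideal R) (n : ℕ) :
    (I ⊔ J) ^ n = ∑ i ∈ Finset.range (n + 1), I ^ i * J ^ (n - i) := by
  rw [← Ideal.add_eq_sup, add_pow]
  refine Finset.sum_congr rfl fun i hi => ?_
  rw [ideal_nat_cast_eq_top (Nat.choose_pos (Nat.lt_succ_iff.mp (Finset.mem_range.mp hi))),
    ← Ideal.one_eq_top, mul_one]

/-- Let `R` be a domain, `X₁, X₂` nonzero elements of `R`. For all positive integers
`k, ℓ` with `k ≥ ℓ - 1`, one has `⟨X₁, X₂⟩^k * ⟨X₁^ℓ, X₂^ℓ⟩ = ⟨X₁, X₂⟩^(k+ℓ)`. -/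
theorem span_pow_mul_span_pow {R : Type*} [CommRing R] [IsDomain R]
    (X₁ X₂ : R) (h1 : X₁ ≠ 0) (h2 : X₂ ≠ 0)
    (k ℓ : ℕ) (hk : 0 < k) (hℓ : 0 < ℓ) (hkl : ℓ ≤ k + 1) :
    (Ideal.span {X₁, X₂}) ^ k * Ideal.span {X₁ ^ ℓ, X₂ ^ ℓ} =
      (Ideal.span {X₁, X₂}) ^ (k + ℓ) := by
  set S : Ideal R := Ideal.span {X₁, X₂} with hS
  set I : Ideal R := Ideal.span {X₁} with hI
  set J : Ideal R := Ideal.span {X₂} with hJ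
  have hSIJ : S = I ⊔ J := by
    rw [hS, hI, hJ, Ideal.span_insert]
  have hX₁S : X₁ ∈ S := Ideal.subset_span (by simp)
  have hX₂S : X₂ ∈ S := Ideal.subset_span (by simp)
  have hIS : I ≤ S := hSIJ ▸ le_sup_left
  have hJS : J ≤ S := hSIJ ▸ le_sup_right
  have hTle : Ideal.span {X₁ ^ ℓ, X₂ ^ ℓ} ≤ S ^ ℓ := by
    rw [Ideal.span_le]
    rintro x (rfl | rfl)
    · exact Ideal.pow_mem_pow hX₁S ℓ
    · exact Ideal.pow_mem_pow hX₂S ℓ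
  apply le_antisymm
  · calc S ^ k * Ideal.span {X₁ ^ ℓ, X₂ ^ ℓ} ≤ S ^ k * S ^ ℓ :=
          Ideal.mul_mono_right hTle
      _ = S ^ (k + ℓ) := (pow_add S k ℓ).symm
  · rw [hSIJ, sup_pow_eq_sum, Ideal.sum_eq_sup, Finset.sup_le_iff]
    intro i hi
    rw [Finset.mem_range, Nat.lt_succ_iff] at hi
    rcases le_or_gt ℓ i with hle | hlt
    · -- use X₁^ℓ
      have h1' : I ^ i = I ^ (i - ℓ) * I ^ ℓ := by
        rw [← pow_add, Nat.sub_add_cancel hle]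
      have : I ^ i * J ^ (k + ℓ - i) = (I ^ (i - ℓ) * J ^ (k + ℓ - i)) * I ^ ℓ := by
        rw [h1']; ring
      rw [this]
      refine Ideal.mul_mono ?_ ?_
      · calc I ^ (i - ℓ) * J ^ (k + ℓ - i) ≤ S ^ (i - ℓ) * S ^ (k + ℓ - i) :=
              Ideal.mul_mono (Ideal.pow_right_mono hIS _) (Ideal.pow_right_mono hJS _)
          _ = S ^ (i - ℓ + (k + ℓ - i)) := (pow_add _ _ _).symm
          _ = S ^ k := by congr 1; omega
          _ = (I ⊔ J) ^ k := by rw [hSIJ]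
      · rw [hI, Ideal.span_singleton_pow, Ideal.span_singleton_le_iff_mem]
        exact Ideal.subset_span (by simp)
    · -- use X₂^ℓ
      have hik : i ≤ k := by omega
      have : I ^ i * J ^ (k + ℓ - i) = (I ^ i * J ^ (k - i)) * J ^ ℓ := by
        rw [mul_assoc, ← pow_add]
        congr 2
        omega
      rw [this]
      refine Ideal.mul_mono ?_ ?_
      · calc I ^ i * J ^ (k - i) ≤ S ^ i * S ^ (k - i) :=
              Ideal.mul_mono (Ideal.pow_right_mono hIS _) (Ideal.pow_right_mono hJS _)
          _ = S ^ (i + (k - i)) := (pow_add _ _ _).symm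
          _ = S ^ k := by congr 1; omega
          _ = (I ⊔ J) ^ k := by rw [hSIJ]
      · rw [hJ, Ideal.span_singleton_pow, Ideal.span_singleton_le_iff_mem]
        exact Ideal.subset_span (by simp)
end

section
/- Let R be a commutative domain and X₁, X₂ nonzero elements of R. For every positive integer k, the product ⟨X₁, X₂⟩ · 𝔠_{2k+1} equals ⟨X₁, X₂⟩^{2k+2}, where 𝔠_{2k+1} = ⟨ {X₁^{2k+1}, X₁^{2k}X₂} ∪ {X₁^{2k−j}X₂^{j+1} : j ∈ [1, 2k+1] even} ⟩. -/
lemma pow_span_pair_aux {R : Type*} [CommRing R] (X₁ X₂ : R) (n : ℕ) :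
    Ideal.span {X₁, X₂} ^ n =
      Ideal.span {p : R | ∃ i ≤ n, p = X₁ ^ i * X₂ ^ (n - i)} := by
  induction n with
  | zero =>
    rw [pow_zero, Ideal.one_eq_top, eq_comm, Ideal.eq_top_iff_one]
    exact Ideal.subset_span ⟨0, le_refl 0, by simp⟩
  | succ n ih =>
    rw [pow_succ, ih, Ideal.span_mul_span']
    apply le_antisymm
    · rw [Ideal.span_le]
      rintro p ⟨y, ⟨i, hi, rfl⟩, x, hx, rfl⟩
      rcases hx with rfl | rfl
      · apply Ideal.subset_span
        exact ⟨i + 1, by omega, by rw [Nat.succ_sub_succ]; ring⟩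
      · apply Ideal.subset_span
        refine ⟨i, by omega, ?_⟩
        rw [Nat.succ_sub hi, pow_succ]; ring
    · rw [Ideal.span_le]
      rintro p ⟨i, hi, rfl⟩
      apply Ideal.subset_span
      rcases i with _ | m
      · exact ⟨X₁ ^ 0 * X₂ ^ (n - 0), ⟨0, Nat.zero_le _, rfl⟩, X₂, by simp, by
          simp [pow_succ]⟩
      · exact ⟨X₁ ^ m * X₂ ^ (n - m), ⟨m, by omega, rfl⟩, X₁, by simp, by
          rw [Nat.succ_sub_succ, pow_succ]; ring⟩

/-- Let `R` be a domain and `X₁, X₂` nonzero elements. For every positive integer `k`,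
`⟨X₁, X₂⟩ · 𝔠_{2k+1} = ⟨X₁, X₂⟩^(2k+2)`, where
`𝔠_{2k+1} = ⟨{X₁^{2k+1}, X₁^{2k}X₂} ∪ {X₁^{2k-j}X₂^{j+1} : j ∈ [1,2k+1] even}⟩`. -/
theorem span_mul_c_odd {R : Type*} [CommRing R] [IsDomain R]
    (X₁ X₂ : R) (h1 : X₁ ≠ 0) (h2 : X₂ ≠ 0) (k : ℕ) (hk : 0 < k) :
    Ideal.span {X₁, X₂} *
      Ideal.span ({X₁ ^ (2 * k + 1), X₁ ^ (2 * k) * X₂} ∪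
        {p : R | ∃ j : ℕ, 1 ≤ j ∧ j ≤ 2 * k + 1 ∧ Even j ∧ p = X₁ ^ (2 * k - j) * X₂ ^ (j + 1)}) =
      (Ideal.span {X₁, X₂}) ^ (2 * k + 2) := by
  rw [pow_span_pair_aux, Ideal.span_mul_span']
  apply le_antisymm
  · rw [Ideal.span_le]
    rintro p ⟨x, hx, y, hy, rfl⟩
    apply Ideal.subset_span
    rcases hx with rfl | rfl
    · rcases hy with (rfl | rfl) | ⟨j, hj1, hj2, hje, rfl⟩
      · exact ⟨2 * k + 2, le_refl _, by simp [pow_succ]; ring⟩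
      · refine ⟨2 * k + 1, by omega, ?_⟩
        have : 2 * k + 2 - (2 * k + 1) = 1 := by omega
        rw [this, pow_succ]; ring
      · have hj : j ≤ 2 * k := by
          rcases hje with ⟨t, rfl⟩; omega
        refine ⟨2 * k + 1 - j, by omega, ?_⟩
        have h1 : 2 * k + 2 - (2 * k + 1 - j) = j + 1 := by omega
        have h2 : 2 * k + 1 - j = (2 * k - j) + 1 := by omega
        rw [h1, h2, pow_succ]; ring
    · rcases hy with (rfl | rfl) | ⟨j, hj1, hj2, hje, rfl⟩
      · refine ⟨2 * k + 1, by omega, ?_⟩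
        have : 2 * k + 2 - (2 * k + 1) = 1 := by omega
        rw [this]; ring
      · refine ⟨2 * k, by omega, ?_⟩
        have : 2 * k + 2 - 2 * k = 2 := by omega
        rw [this]; ring
      · refine ⟨2 * k - j, by omega, ?_⟩
        have hj : j ≤ 2 * k := by rcases hje with ⟨t, rfl⟩; omega
        have h1 : 2 * k + 2 - (2 * k - j) = j + 2 := by omega
        rw [h1, pow_succ]; ring
  · rw [Ideal.span_le]
    rintro p ⟨i, hi, rfl⟩
    apply Ideal.subset_span
    rcases Nat.even_or_odd i with ⟨t, rfl⟩ | ⟨t, rfl⟩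
    · -- i = t + t even
      rcases Nat.lt_or_ge t k with ht | ht
      · -- t < k : j = 2k - 2t, even, in [2, 2k]
        refine ⟨X₂, by simp, X₁ ^ (2 * k - (2 * k - 2 * t)) * X₂ ^ ((2 * k - 2 * t) + 1),
          Or.inr ⟨2 * k - 2 * t, by omega, by omega, ⟨k - t, by omega⟩, rfl⟩, ?_⟩
        rw [show 2 * k - (2 * k - 2 * t) = t + t by omega,
          show 2 * k + 2 - (t + t) = (2 * k - 2 * t + 1) + 1 by omega, pow_succ]
        ring
      · rcases Nat.lt_or_ge t (k + 1) with ht' | ht'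
        · -- t = k : use X₂ * (X₁^(2k) * X₂)
          refine ⟨X₂, by simp, X₁ ^ (2 * k) * X₂, Or.inl (Or.inr rfl), ?_⟩
          rw [show 2 * k + 2 - (t + t) = 2 by omega, show 2 * k = t + t by omega]
          ring
        · -- t = k + 1 : i = 2k + 2, use X₁ * X₁^(2k+1)
          have htk : t = k + 1 := by omega
          refine ⟨X₁, by simp, X₁ ^ (2 * k + 1), Or.inl (Or.inl rfl), ?_⟩
          rw [show 2 * k + 2 - (t + t) = 0 by omega, show t + t = (2 * k + 1) + 1 by omega,
            pow_succ]
          ring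
    · -- i = 2t + 1 odd
      rcases Nat.lt_or_ge t k with ht | ht
      · -- t < k : j = 2k - 2t, even, in [2, 2k]
        refine ⟨X₁, by simp, X₁ ^ (2 * k - (2 * k - 2 * t)) * X₂ ^ ((2 * k - 2 * t) + 1),
          Or.inr ⟨2 * k - 2 * t, by omega, by omega, ⟨k - t, by omega⟩, rfl⟩, ?_⟩
        rw [show 2 * k - (2 * k - 2 * t) = t + t by omega,
          show 2 * k + 2 - (2 * t + 1) = 2 * k - 2 * t + 1 by omega,
          show 2 * t + 1 = (t + t) + 1 by omega, pow_succ]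
        ring
      · -- t = k : i = 2k + 1, use X₂ * X₁^(2k+1)
        have htk : t = k := by omega
        refine ⟨X₂, by simp, X₁ ^ (2 * k + 1), Or.inl (Or.inl rfl), ?_⟩
        rw [show 2 * k + 2 - (2 * t + 1) = 1 by omega, show 2 * t + 1 = 2 * k + 1 by omega]
        ring
end

section
/- Let D be a domain, R = D[X₁,…,Xₙ], and let I, J be nonzero ideals with mdeg(I) = d, mdeg(J) = e, mdeg(IJ) = m (so m = d + e). Then the set (IJ)[m] of degree-m homogeneous components of elements of IJ equals the D-module product I[d]·J[e], where I[d] = {f_d : f ∈ I} and the product consists of all finite sums of products a·b with a ∈ I[d], b ∈ J[e]. -/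
/-!
If the homogeneous components of `f` below degree `d` and those of `g` below degree `e` vanish,
then those of `f * g` below degree `d + e` vanish and `(f * g)_(d + e) = f_d * g_e`. Applied to
the generators `f * g` of `I * J`, this shows that `(I * J)[d + e]` is additively generated by
the products `f_d * g_e`; over a domain one of these is nonzero, so `mdeg (I * J) = d + e`.
-/

/-- The set `I[i]` of degree-`i` homogeneous components of elements of `I`. -/
def compSet {D : Type*} [CommRing D] {n : ℕ}
    (I : Ideal (MvPolynomial (Fin n) D)) (i : ℕ) : Set (MvPolynomial (Fin n) D) :=
  {g | ∃ f ∈ I, MvPolynomial.homogeneousComponent i f = g}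

/-- The min-degree of an ideal of a polynomial ring. -/
noncomputable def mdegI {D : Type*} [CommRing D] {n : ℕ}
    (I : Ideal (MvPolynomial (Fin n) D)) : ℕ :=
  sInf {d : ℕ | ∃ f ∈ I, MvPolynomial.homogeneousComponent d f ≠ 0}

open Finset

namespace MvPolynomial

variable {σ R : Type*} [CommSemiring R]

attribute [local instance] gradedAlgebra in
theorem homogeneousComponent_mul (f g : MvPolynomial σ R) (k : ℕ) :
    homogeneousComponent k (f * g) =
      ∑ ij ∈ antidiagonal k, homogeneousComponent ij.1 f * homogeneousComponent ij.2 g := by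
  have h := DirectSum.coe_mul_apply_eq_sum_antidiagonal _
    (DirectSum.decompose (homogeneousSubmodule σ R) f) (DirectSum.decompose _ g) k
  rw [← DirectSum.decompose_mul] at h
  simpa only [← DirectSum.Decomposition.decompose'_eq, decomposition.decompose'_apply] using h

variable {f g : MvPolynomial σ R} {d e : ℕ}

theorem homogeneousComponent_mul_eq_zero_of_lt (hf : ∀ i < d, homogeneousComponent i f = 0)
    (hg : ∀ j < e, homogeneousComponent j g = 0) {k : ℕ} (hk : k < d + e) :
    homogeneousComponent k (f * g) = 0 := by
  rw [homogeneousComponent_mul]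
  refine sum_eq_zero fun ij hij => ?_
  rw [HasAntidiagonal.mem_antidiagonal] at hij
  rcases lt_or_ge ij.1 d with hi | hi
  · rw [hf _ hi, zero_mul]
  · rw [hg _ (by omega), mul_zero]

theorem homogeneousComponent_add_mul (hf : ∀ i < d, homogeneousComponent i f = 0)
    (hg : ∀ j < e, homogeneousComponent j g = 0) :
    homogeneousComponent (d + e) (f * g) =
      homogeneousComponent d f * homogeneousComponent e g := by
  rw [homogeneousComponent_mul,
    sum_eq_single_of_mem (d, e) (HasAntidiagonal.mem_antidiagonal.2 rfl)]
  rintro ⟨i, j⟩ hij hne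
  rw [HasAntidiagonal.mem_antidiagonal] at hij
  dsimp only
  rcases lt_or_ge i d with hi | hi
  · rw [hf _ hi, zero_mul]
  · have hj : j < e := by
      by_contra
      exact hne (Prod.ext (by omega) (by omega))
    rw [hg _ hj, mul_zero]

end MvPolynomial

open MvPolynomial

section
variable {D : Type*} [CommRing D] {n : ℕ} {I J : Ideal (MvPolynomial (Fin n) D)}

theorem homogeneousComponent_eq_zero_of_lt_mdegI {f : MvPolynomial (Fin n) D} (hf : f ∈ I)
    {i : ℕ} (hi : i < mdegI I) : homogeneousComponent i f = 0 := by
  by_contra h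
  exact Nat.notMem_of_lt_sInf hi ⟨f, hf, h⟩

theorem exists_homogeneousComponent_mdegI_ne_zero (hI : I ≠ ⊥) :
    ∃ f ∈ I, homogeneousComponent (mdegI I) f ≠ 0 := by
  obtain ⟨f, hfI, hf⟩ := (Submodule.ne_bot_iff I).mp hI
  obtain ⟨i, hi⟩ : ∃ i, homogeneousComponent i f ≠ 0 := by
    by_contra! h
    exact hf (by rw [← sum_homogeneousComponent f]; exact sum_eq_zero fun i _ => h i)
  exact Nat.sInf_mem (s := {d | ∃ f ∈ I, homogeneousComponent d f ≠ 0}) ⟨i, f, hfI, hi⟩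

theorem homogeneousComponent_eq_zero_of_mem_mul {h : MvPolynomial (Fin n) D} (hh : h ∈ I * J)
    {k : ℕ} (hk : k < mdegI I + mdegI J) : homogeneousComponent k h = 0 := by
  refine Submodule.mul_induction_on hh (fun f hf g hg => ?_) (fun x y hx hy => ?_)
  · exact homogeneousComponent_mul_eq_zero_of_lt
      (fun _ => homogeneousComponent_eq_zero_of_lt_mdegI hf)
      (fun _ => homogeneousComponent_eq_zero_of_lt_mdegI hg) hk
  · rw [map_add, hx, hy, add_zero]

theorem homogeneousComponent_mdegI_add_mul {f g : MvPolynomial (Fin n) D} (hf : f ∈ I)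
    (hg : g ∈ J) :
    homogeneousComponent (mdegI I + mdegI J) (f * g) =
      homogeneousComponent (mdegI I) f * homogeneousComponent (mdegI J) g :=
  homogeneousComponent_add_mul (fun _ => homogeneousComponent_eq_zero_of_lt_mdegI hf)
    (fun _ => homogeneousComponent_eq_zero_of_lt_mdegI hg)

theorem mdegI_mul [IsDomain D] (hI : I ≠ ⊥) (hJ : J ≠ ⊥) :
    mdegI (I * J) = mdegI I + mdegI J := by
  obtain ⟨f, hfI, hf⟩ := exists_homogeneousComponent_mdegI_ne_zero hI
  obtain ⟨g, hgJ, hg⟩ := exists_homogeneousComponent_mdegI_ne_zero hJ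
  have hmem : mdegI I + mdegI J ∈ {k | ∃ h ∈ I * J, homogeneousComponent k h ≠ 0} :=
    ⟨f * g, Ideal.mul_mem_mul hfI hgJ,
      by rw [homogeneousComponent_mdegI_add_mul hfI hgJ]; exact mul_ne_zero hf hg⟩
  refine le_antisymm (Nat.sInf_le hmem) (le_csInf ⟨_, hmem⟩ ?_)
  rintro k ⟨h, hh, hne⟩
  by_contra! hk
  exact hne (homogeneousComponent_eq_zero_of_mem_mul hh hk)

end

/-- Let `D` be a domain, `R = D[X₁,…,Xₙ]`, and `I, J` nonzero ideals with `mdeg(I) = d`,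
`mdeg(J) = e`, `mdeg(IJ) = m`. Then `(IJ)[m] = I[d] · J[e]`, where the module product
consists of all finite sums of products `a·b` with `a ∈ I[d]`, `b ∈ J[e]`. -/
theorem compSet_mul {D : Type*} [CommRing D] [IsDomain D] {n : ℕ}
    (I J : Ideal (MvPolynomial (Fin n) D)) (hI : I ≠ ⊥) (hJ : J ≠ ⊥)
    (d e m : ℕ) (hd : mdegI I = d) (he : mdegI J = e) (hm : mdegI (I * J) = m) :
    compSet (I * J) m =
      ↑(AddSubmonoid.closure
        {x : MvPolynomial (Fin n) D | ∃ a ∈ compSet I d, ∃ b ∈ compSet J e, x = a * b}) := by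
  subst hd he hm
  rw [mdegI_mul hI hJ]
  refine Set.Subset.antisymm ?_ ?_
  · rintro _ ⟨h, hh, rfl⟩
    refine Submodule.mul_induction_on hh (fun f hf g hg => ?_) (fun x y hx hy => ?_)
    · exact AddSubmonoid.subset_closure
        ⟨_, ⟨f, hf, rfl⟩, _, ⟨g, hg, rfl⟩, homogeneousComponent_mdegI_add_mul hf hg⟩
    · rw [map_add]
      exact add_mem hx hy
  · refine AddSubmonoid.closure_le
      (S := (I * J).toAddSubmonoid.map (homogeneousComponent _).toAddMonoidHom).2 ?_
    rintro _ ⟨_, ⟨f, hf, rfl⟩, _, ⟨g, hg, rfl⟩, rfl⟩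
    exact ⟨f * g, Ideal.mul_mem_mul hf hg, homogeneousComponent_mdegI_add_mul hf hg⟩
end

section
/- Let K be a field and n ≥ 2. The ideal ⟨X², Y²⟩ of K[X, Y] is an atom of the multiplicative monoid of nonzero ideals of K[X, Y]: it cannot be written as a product I·J of two proper nonzero ideals both strictly containing it. -/
/-!
Suppose `⟨X², Y²⟩ = I·J` with `I`, `J` proper. Both contain `X²` and `Y²`, so both lie in
`(X, Y)`. Restrict to the line `t ↦ t • a`: if the linear part of every element of `I` vanishes at
`a`, then elements of `I` vanish to order `2` and elements of `J` to order `1` in `t`, so elements of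
`I·J` vanish to order `3`; this is impossible when `X_k²` (order exactly `2` if `a_k ≠ 0`) lies
in `I·J`. Taking `a = (1, 0)` gives `g ∈ J` with `∂g/∂X (0) ≠ 0`; taking
`a = (∂g/∂Y (0), ∂g/∂X (0))` gives `f ∈ I` whose linear part does not vanish at `a`. That value is
the `XY`-coefficient of `f·g`, which is zero on `⟨X², Y²⟩`.
-/

open MvPolynomial

namespace MvPolynomial

theorem sub_C_constantCoeff_mem_idealOfVars {σ R : Type*} [CommRing R] (f : MvPolynomial σ R) :
    f - C (constantCoeff f) ∈ idealOfVars σ R := by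
  rw [← pow_one (idealOfVars σ R), mem_pow_idealOfVars_iff']
  intro x hx
  obtain rfl : x = 0 := by simpa [Finsupp.degree_eq_zero_iff] using hx
  simp [← constantCoeff_eq]

theorem le_ker_constantCoeff_of_X_mem_radical {σ K : Type*} [Field K]
    {I : Ideal (MvPolynomial σ K)} (hI : I ≠ ⊤) (hX : ∀ i, X i ∈ I.radical) :
    I ≤ RingHom.ker constantCoeff := by
  intro f hf
  by_contra hc
  have hvars : idealOfVars σ K ≤ I.radical := Ideal.span_le.2 (Set.range_subset_iff.2 hX)
  have hC : C (constantCoeff f) ∈ I.radical := by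
    simpa using I.radical.sub_mem (I.le_radical hf) (hvars (sub_C_constantCoeff_mem_idealOfVars f))
  exact hI (Ideal.radical_eq_top.1 (Ideal.eq_top_of_isUnit_mem _ hC ((Ne.isUnit hc).map C)))

section CommSemiring

variable {σ R : Type*} [CommSemiring R]

theorem constantCoeff_pderiv_pderiv_mul {f g : MvPolynomial σ R} (hf : constantCoeff f = 0)
    (hg : constantCoeff g = 0) (i j : σ) :
    constantCoeff (pderiv i (pderiv j (f * g))) =
      constantCoeff (pderiv j f) * constantCoeff (pderiv i g) +
        constantCoeff (pderiv i f) * constantCoeff (pderiv j g) := by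
  simp only [Derivation.leibniz, smul_eq_mul, map_add, map_mul, hf, hg, zero_mul, zero_add]
  ring

theorem constantCoeff_pderiv_pderiv_mul_X_sq {i j : σ} (hij : i ≠ j) (p : MvPolynomial σ R)
    (k : σ) : constantCoeff (pderiv i (pderiv j (p * X k ^ 2))) = 0 := by
  classical
  by_cases hkj : k = j
  · subst hkj
    simp [Derivation.leibniz, pderiv_X, hij]
  · simp [pderiv_X, Pi.single_apply, apply_ite constantCoeff, hkj]

theorem constantCoeff_pderiv_pderiv_eq_zero_of_mem_span {i j : σ} (hij : i ≠ j) {k l : σ}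
    {h : MvPolynomial σ R} (hh : h ∈ Ideal.span {X k ^ 2, X l ^ 2}) :
    constantCoeff (pderiv i (pderiv j h)) = 0 := by
  obtain ⟨p, q, rfl⟩ := Ideal.mem_span_pair.1 hh
  simp only [map_add, constantCoeff_pderiv_pderiv_mul_X_sq hij, add_zero]

theorem coeff_zero_aeval_C_mul_X (a : σ → R) (f : MvPolynomial σ R) :
    (aeval (fun i => Polynomial.C (a i) * Polynomial.X) f).coeff 0 = constantCoeff f := by
  induction f using MvPolynomial.induction_on with
  | C c => simp
  | add p q hp hq => simp [hp, hq]
  | mul_X p i hp => simp [Polynomial.mul_coeff_zero]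

theorem coeff_one_aeval_C_mul_X [Fintype σ] (a : σ → R) (f : MvPolynomial σ R) :
    (aeval (fun i => Polynomial.C (a i) * Polynomial.X) f).coeff 1 =
      ∑ i, a i * constantCoeff (pderiv i f) := by
  classical
  induction f using MvPolynomial.induction_on with
  | C c => simp
  | add p q hp hq => simp [hp, hq, mul_add, Finset.sum_add_distrib]
  | mul_X p i hp =>
    rw [map_mul, aeval_X, ← mul_assoc, Polynomial.coeff_mul_X, Polynomial.coeff_mul_C,
      coeff_zero_aeval_C_mul_X]
    simp [pderiv_X, Pi.single_apply, apply_ite constantCoeff, mul_comm]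

theorem X_dvd_aeval_C_mul_X_iff (a : σ → R) (f : MvPolynomial σ R) :
    Polynomial.X ∣ aeval (fun i => Polynomial.C (a i) * Polynomial.X) f ↔ constantCoeff f = 0 := by
  rw [Polynomial.X_dvd_iff, coeff_zero_aeval_C_mul_X]

theorem X_sq_dvd_aeval_C_mul_X_iff [Fintype σ] (a : σ → R) (f : MvPolynomial σ R) :
    Polynomial.X ^ 2 ∣ aeval (fun i => Polynomial.C (a i) * Polynomial.X) f ↔
      constantCoeff f = 0 ∧ ∑ i, a i * constantCoeff (pderiv i f) = 0 := by
  simp [Polynomial.X_pow_dvd_iff, Nat.le_one_iff_eq_zero_or_eq_one, or_imp,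
    forall_and, coeff_zero_aeval_C_mul_X, coeff_one_aeval_C_mul_X]

theorem exists_linear_part_ne_zero_of_X_sq_mem_mul [Fintype σ] [NoZeroDivisors R]
    {I J : Ideal (MvPolynomial σ R)} (hI : I ≤ RingHom.ker constantCoeff)
    (hJ : J ≤ RingHom.ker constantCoeff) {a : σ → R} {k : σ} (hk : a k ≠ 0)
    (hmem : X k ^ 2 ∈ I * J) : ∃ f ∈ I, ∑ i, a i * constantCoeff (pderiv i f) ≠ 0 := by
  by_contra! hlin
  set φ := aeval (R := R) fun i => Polynomial.C (a i) * Polynomial.X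
  have hIJ : I * J ≤ (Ideal.span {Polynomial.X ^ 3}).comap φ := by
    refine Ideal.mul_le.2 fun f hf g hg => ?_
    rw [Ideal.mem_comap, Ideal.mem_span_singleton, map_mul, pow_succ]
    exact mul_dvd_mul ((X_sq_dvd_aeval_C_mul_X_iff a f).2 ⟨hI hf, hlin f hf⟩)
      ((X_dvd_aeval_C_mul_X_iff a g).2 (hJ hg))
  have hdvd := Ideal.mem_span_singleton.1 (hIJ hmem)
  rw [map_pow, aeval_X, mul_pow, ← Polynomial.C_pow, Polynomial.X_pow_dvd_iff] at hdvd
  have hcoeff := hdvd 2 (by norm_num)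
  rw [Polynomial.coeff_C_mul_X_pow, if_pos rfl] at hcoeff
  exact hk (pow_eq_zero_iff two_ne_zero |>.1 hcoeff)

end CommSemiring
end MvPolynomial

/-- The ideal `⟨X², Y²⟩` of `K[X, Y]` is an atom of the monoid of nonzero ideals:
whenever it equals a product `I·J` of two ideals, one of `I, J` is the unit ideal. -/
theorem span_sq_atom {K : Type*} [Field K]
    (I J : Ideal (MvPolynomial (Fin 2) K))
    (h : Ideal.span {(X 0 : MvPolynomial (Fin 2) K) ^ 2, (X 1 : MvPolynomial (Fin 2) K) ^ 2}
      = I * J) :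
    I = ⊤ ∨ J = ⊤ := by
  by_contra! hIJ
  obtain ⟨hI, hJ⟩ := hIJ
  have hsq (i : Fin 2) : X i ^ 2 ∈ I * J := by
    rw [← h]
    exact Ideal.subset_span (by fin_cases i <;> simp)
  have hIm := le_ker_constantCoeff_of_X_mem_radical hI fun i => ⟨2, Ideal.mul_le_left (hsq i)⟩
  have hJm := le_ker_constantCoeff_of_X_mem_radical hJ fun i => ⟨2, Ideal.mul_le_right (hsq i)⟩
  obtain ⟨g, hg, hg0⟩ : ∃ g ∈ J, constantCoeff (pderiv 0 g) ≠ 0 := by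
    simpa using exists_linear_part_ne_zero_of_X_sq_mem_mul hJm hIm (a := ![1, 0]) (k := 0)
      one_ne_zero (mul_comm I J ▸ hsq 0)
  obtain ⟨f, hf, hfg⟩ := exists_linear_part_ne_zero_of_X_sq_mem_mul hIm hJm
    (a := ![constantCoeff (pderiv 1 g), constantCoeff (pderiv 0 g)]) (k := 1) hg0 (hsq 1)
  have hmixed := constantCoeff_pderiv_pderiv_mul (hIm hf) (hJm hg) 0 1
  rw [constantCoeff_pderiv_pderiv_eq_zero_of_mem_span zero_ne_one (h ▸ Ideal.mul_mem_mul hf hg)]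
    at hmixed
  apply hfg
  simp only [Fin.sum_univ_two, Matrix.cons_val_zero, Matrix.cons_val_one]
  linear_combination -hmixed
end

section
/- Let K be a field. In K[X, Y] the identity ⟨X², Y²⟩ · ⟨X³ + Y³, X²Y, XY²⟩ = ⟨X, Y⟩⁵ holds. -/
open MvPolynomial

open Ideal

lemma key {R : Type*} [CommRing R] (x y : R) :
    Ideal.span {x ^ 2, y ^ 2} * Ideal.span {x ^ 3 + y ^ 3, x ^ 2 * y, x * y ^ 2} =
      (Ideal.span {x, y}) ^ 5 := by
  set I := Ideal.span {x, y} with hI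
  have hx : x ∈ I := subset_span (by simp)
  have hy : y ∈ I := subset_span (by simp)
  -- generators memberships
  have hx2 : x ^ 2 ∈ Ideal.span {x ^ 2, y ^ 2} := subset_span (by simp)
  have hy2 : y ^ 2 ∈ Ideal.span {x ^ 2, y ^ 2} := subset_span (by simp)
  have hc1 : x ^ 3 + y ^ 3 ∈ Ideal.span {x ^ 3 + y ^ 3, x ^ 2 * y, x * y ^ 2} :=
    subset_span (by simp)
  have hc2 : x ^ 2 * y ∈ Ideal.span {x ^ 3 + y ^ 3, x ^ 2 * y, x * y ^ 2} :=
    subset_span (by simp)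
  have hc3 : x * y ^ 2 ∈ Ideal.span {x ^ 3 + y ^ 3, x ^ 2 * y, x * y ^ 2} :=
    subset_span (by simp)
  set J := Ideal.span {x ^ 2, y ^ 2} * Ideal.span {x ^ 3 + y ^ 3, x ^ 2 * y, x * y ^ 2} with hJ
  have m50 : x ^ 5 ∈ J := by
    have h := sub_mem (Ideal.mul_mem_mul hx2 hc1) (Ideal.mul_mem_mul hy2 hc2)
    convert h using 1; ring
  have m41 : x ^ 4 * y ∈ J := by
    have h := Ideal.mul_mem_mul hx2 hc2; convert h using 1; ring
  have m32 : x ^ 3 * y ^ 2 ∈ J := by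
    have h := Ideal.mul_mem_mul hx2 hc3; convert h using 1; ring
  have m23 : x ^ 2 * y ^ 3 ∈ J := by
    have h := Ideal.mul_mem_mul hy2 hc2; convert h using 1; ring
  have m14 : x * y ^ 4 ∈ J := by
    have h := Ideal.mul_mem_mul hy2 hc3; convert h using 1; ring
  have m05 : y ^ 5 ∈ J := by
    have h := sub_mem (Ideal.mul_mem_mul hy2 hc1) (Ideal.mul_mem_mul hx2 hc3)
    convert h using 1; ring
  apply le_antisymm
  · -- J ≤ I^5
    have h2 : Ideal.span {x ^ 2, y ^ 2} ≤ I * I := by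
      apply span_le.2
      rintro z (rfl | rfl)
      · rw [show x ^ 2 = x * x by ring]; exact Ideal.mul_mem_mul hx hx
      · rw [show y ^ 2 = y * y by ring]; exact Ideal.mul_mem_mul hy hy
    have h3 : Ideal.span {x ^ 3 + y ^ 3, x ^ 2 * y, x * y ^ 2} ≤ I * I * I := by
      apply span_le.2
      rintro z (rfl | rfl | rfl)
      · rw [show x ^ 3 + y ^ 3 = x * x * x + y * y * y by ring]
        exact add_mem (Ideal.mul_mem_mul (Ideal.mul_mem_mul hx hx) hx)
          (Ideal.mul_mem_mul (Ideal.mul_mem_mul hy hy) hy)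
      · rw [show x ^ 2 * y = x * x * y by ring]
        exact Ideal.mul_mem_mul (Ideal.mul_mem_mul hx hx) hy
      · rw [show x * y ^ 2 = x * y * y by ring]
        exact Ideal.mul_mem_mul (Ideal.mul_mem_mul hx hy) hy
    calc J ≤ (I * I) * (I * I * I) := Ideal.mul_mono h2 h3
      _ = I ^ 5 := by ring
  · -- I^5 ≤ J
    have h2 : I * I = Ideal.span {x ^ 2, x * y, y ^ 2} := by
      rw [hI, Ideal.span_mul_span']
      apply le_antisymm
      · apply span_le.2
        rintro _ ⟨a, (rfl | rfl), b, (rfl | rfl), rfl⟩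
        · exact subset_span (by left; ring)
        · exact subset_span (by right; left; rfl)
        · exact subset_span (by right; left; ring)
        · exact subset_span (by right; right; simp; ring)
      · apply span_le.2
        rintro z (rfl | rfl | rfl)
        · exact subset_span ⟨x, by simp, x, by simp, by ring⟩
        · exact subset_span ⟨x, by simp, y, by simp, by ring⟩
        · exact subset_span ⟨y, by simp, y, by simp, by ring⟩
    have h3 : Ideal.span {x ^ 2, x * y, y ^ 2} * I =
        Ideal.span {x ^ 3, x ^ 2 * y, x * y ^ 2, y ^ 3} := by
      rw [hI, Ideal.span_mul_span']
      apply le_antisymm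
      · apply span_le.2
        rintro _ ⟨a, (rfl | rfl | rfl), b, (rfl | rfl), rfl⟩
        · exact subset_span (by left; ring)
        · exact subset_span (by right; left; ring)
        · exact subset_span (by right; left; ring)
        · exact subset_span (by right; right; left; ring)
        · exact subset_span (by right; right; left; ring)
        · exact subset_span (by right; right; right; simp; ring)
      · apply span_le.2
        rintro z (rfl | rfl | rfl | rfl)
        · exact subset_span ⟨x ^ 2, by simp, x, by simp, by ring⟩
        · exact subset_span ⟨x ^ 2, by simp, y, by simp, by ring⟩
        · exact subset_span ⟨x * y, by simp, y, by simp, by ring⟩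
        · exact subset_span ⟨y ^ 2, by simp, y, by simp, by ring⟩
    have h5 : I ^ 5 = Ideal.span {x ^ 2, x * y, y ^ 2} *
        Ideal.span {x ^ 3, x ^ 2 * y, x * y ^ 2, y ^ 3} := by
      rw [← h3, ← h2]; ring
    rw [h5, Ideal.span_mul_span']
    apply span_le.2
    rintro _ ⟨a, (rfl | rfl | rfl), b, (rfl | rfl | rfl | rfl), rfl⟩
    · show x ^ 2 * x ^ 3 ∈ J; rw [show x ^ 2 * x ^ 3 = x ^ 5 by ring]; exact m50
    · show x ^ 2 * (x ^ 2 * y) ∈ J; rw [show x ^ 2 * (x ^ 2 * y) = x ^ 4 * y by ring]; exact m41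
    · show x ^ 2 * (x * y ^ 2) ∈ J; rw [show x ^ 2 * (x * y ^ 2) = x ^ 3 * y ^ 2 by ring]; exact m32
    · show x ^ 2 * y ^ 3 ∈ J; rw [show x ^ 2 * y ^ 3 = x ^ 2 * y ^ 3 by ring]; exact m23
    · show x * y * x ^ 3 ∈ J; rw [show x * y * x ^ 3 = x ^ 4 * y by ring]; exact m41
    · show x * y * (x ^ 2 * y) ∈ J; rw [show x * y * (x ^ 2 * y) = x ^ 3 * y ^ 2 by ring]; exact m32
    · show x * y * (x * y ^ 2) ∈ J; rw [show x * y * (x * y ^ 2) = x ^ 2 * y ^ 3 by ring]; exact m23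
    · show x * y * y ^ 3 ∈ J; rw [show x * y * y ^ 3 = x * y ^ 4 by ring]; exact m14
    · show y ^ 2 * x ^ 3 ∈ J; rw [show y ^ 2 * x ^ 3 = x ^ 3 * y ^ 2 by ring]; exact m32
    · show y ^ 2 * (x ^ 2 * y) ∈ J; rw [show y ^ 2 * (x ^ 2 * y) = x ^ 2 * y ^ 3 by ring]; exact m23
    · show y ^ 2 * (x * y ^ 2) ∈ J; rw [show y ^ 2 * (x * y ^ 2) = x * y ^ 4 by ring]; exact m14
    · show y ^ 2 * y ^ 3 ∈ J; rw [show y ^ 2 * y ^ 3 = y ^ 5 by ring]; exact m05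



/-- In `K[X, Y]` the identity `⟨X², Y²⟩ · ⟨X³ + Y³, X²Y, XY²⟩ = ⟨X, Y⟩⁵` holds. -/
theorem span_sq_mul_span_cubic {K : Type*} [Field K] :
    Ideal.span {(X 0 : MvPolynomial (Fin 2) K) ^ 2, (X 1 : MvPolynomial (Fin 2) K) ^ 2} *
      Ideal.span {(X 0 : MvPolynomial (Fin 2) K) ^ 3 + (X 1 : MvPolynomial (Fin 2) K) ^ 3,
        (X 0 : MvPolynomial (Fin 2) K) ^ 2 * X 1,
        (X 0 : MvPolynomial (Fin 2) K) * (X 1 : MvPolynomial (Fin 2) K) ^ 2} =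
    (Ideal.span {(X 0 : MvPolynomial (Fin 2) K), (X 1 : MvPolynomial (Fin 2) K)}) ^ 5 := by
  exact key (X 0) (X 1)
end

section
/- If D is a domain in which 2 is a unit, then in R = D[X₁, …, Xₙ] (n ≥ 2) the ideal ⟨X₁⁴, X₁³X₂, X₁²X₂², X₂⁴⟩ factors as ⟨X₁², X₁X₂ + X₂²⟩ · ⟨X₁², X₁X₂ − X₂²⟩; in particular it is not an atom of the monoid of nonzero ideals of R. -/
/-! The inclusion `⊇` of the factorization is a direct expansion of the four products of
generators. For `⊆`, adding and subtracting `x²(xy + y²)` and `x²(xy − y²)` gives `2x³y` and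
`2x²y²`, so dividing by the unit `2` yields `x³y` and `x²y²`; then
`y⁴ = x²y² − (xy + y²)(xy − y²)`. Both factors are proper since their generators have no
constant term. -/

open MvPolynomial

namespace Ideal

variable {R : Type*} [CommRing R]

theorem span_mul_span_le_span_quartic (x y : R) :
    span {x ^ 2, x * y + y ^ 2} * span {x ^ 2, x * y - y ^ 2} ≤
      span {x ^ 4, x ^ 3 * y, x ^ 2 * y ^ 2, y ^ 4} := by
  set I := span {x ^ 4, x ^ 3 * y, x ^ 2 * y ^ 2, y ^ 4}
  have h40 : x ^ 4 ∈ I := subset_span (by simp)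
  have h31 : x ^ 3 * y ∈ I := subset_span (by simp)
  have h22 : x ^ 2 * y ^ 2 ∈ I := subset_span (by simp)
  have h04 : y ^ 4 ∈ I := subset_span (by simp)
  rw [span_mul_span', span_le]
  rintro _ ⟨a, ha | ha, b, hb | hb, rfl⟩ <;> subst ha hb <;> rw [SetLike.mem_coe]
  · convert h40 using 1; ring
  · convert I.sub_mem h31 h22 using 1; ring
  · convert I.add_mem h31 h22 using 1; ring
  · convert I.sub_mem h22 h04 using 1; ring

theorem span_quartic_le_span_mul_span (h2 : IsUnit (2 : R)) (x y : R) :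
    span {x ^ 4, x ^ 3 * y, x ^ 2 * y ^ 2, y ^ 4} ≤
      span {x ^ 2, x * y + y ^ 2} * span {x ^ 2, x * y - y ^ 2} := by
  set P := span {x ^ 2, x * y + y ^ 2} * span {x ^ 2, x * y - y ^ 2}
  have hsq : x ^ 2 * x ^ 2 ∈ P := mul_mem_mul (subset_span (by simp)) (subset_span (by simp))
  have hplus : (x * y + y ^ 2) * x ^ 2 ∈ P :=
    mul_mem_mul (subset_span (by simp)) (subset_span (by simp))
  have hminus : x ^ 2 * (x * y - y ^ 2) ∈ P :=
    mul_mem_mul (subset_span (by simp)) (subset_span (by simp))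
  have hprod : (x * y + y ^ 2) * (x * y - y ^ 2) ∈ P :=
    mul_mem_mul (subset_span (by simp)) (subset_span (by simp))
  have h22 : x ^ 2 * y ^ 2 ∈ P := by
    rw [← unit_mul_mem_iff_mem P h2]
    convert P.sub_mem hplus hminus using 1; ring
  simp only [span_le, Set.insert_subset_iff, Set.singleton_subset_iff, SetLike.mem_coe]
  refine ⟨?_, ?_, h22, ?_⟩
  · convert hsq using 1; ring
  · rw [← unit_mul_mem_iff_mem P h2]
    convert P.add_mem hplus hminus using 1; ring
  · convert P.sub_mem h22 hprod using 1; ring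

theorem span_quartic_eq_span_mul_span (h2 : IsUnit (2 : R)) (x y : R) :
    span {x ^ 4, x ^ 3 * y, x ^ 2 * y ^ 2, y ^ 4} =
      span {x ^ 2, x * y + y ^ 2} * span {x ^ 2, x * y - y ^ 2} :=
  (span_quartic_le_span_mul_span h2 x y).antisymm (span_mul_span_le_span_quartic x y)

theorem span_ne_top_of_forall_map_eq_zero {S F : Type*} [Semiring S] [Nontrivial S]
    [FunLike F R S] [RingHomClass F R S] (f : F) {s : Set R} (hs : ∀ p ∈ s, f p = 0) :
    span s ≠ ⊤ :=
  ne_top_of_le_ne_top (RingHom.ker_ne_top f) (span_le.mpr hs)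

end Ideal

/-- If `D` is a domain in which `2` is a unit, then in `R = D[X₁,…,Xₙ]` (`n ≥ 2`) the ideal
`⟨X₁⁴, X₁³X₂, X₁²X₂², X₂⁴⟩` factors as `⟨X₁², X₁X₂ + X₂²⟩ · ⟨X₁², X₁X₂ − X₂²⟩`; in
particular it is not an atom of the monoid of nonzero ideals of `R`. -/
theorem c4_not_atom {D : Type*} [CommRing D] [IsDomain D] (h2 : IsUnit (2 : D))
    (n : ℕ) (hn : 2 ≤ n) :
    (Ideal.span {(X (⟨0, by omega⟩ : Fin n) : MvPolynomial (Fin n) D) ^ 4,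
        (X (⟨0, by omega⟩ : Fin n) : MvPolynomial (Fin n) D) ^ 3 * X ⟨1, by omega⟩,
        (X (⟨0, by omega⟩ : Fin n) : MvPolynomial (Fin n) D) ^ 2 * X ⟨1, by omega⟩ ^ 2,
        (X (⟨1, by omega⟩ : Fin n) : MvPolynomial (Fin n) D) ^ 4} =
      Ideal.span {(X (⟨0, by omega⟩ : Fin n) : MvPolynomial (Fin n) D) ^ 2,
          X ⟨0, by omega⟩ * X ⟨1, by omega⟩ + X ⟨1, by omega⟩ ^ 2} *
      Ideal.span {(X (⟨0, by omega⟩ : Fin n) : MvPolynomial (Fin n) D) ^ 2,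
          X ⟨0, by omega⟩ * X ⟨1, by omega⟩ - X ⟨1, by omega⟩ ^ 2}) ∧
    ∃ I J : Ideal (MvPolynomial (Fin n) D),
      Ideal.span {(X (⟨0, by omega⟩ : Fin n) : MvPolynomial (Fin n) D) ^ 4,
        (X (⟨0, by omega⟩ : Fin n) : MvPolynomial (Fin n) D) ^ 3 * X ⟨1, by omega⟩,
        (X (⟨0, by omega⟩ : Fin n) : MvPolynomial (Fin n) D) ^ 2 * X ⟨1, by omega⟩ ^ 2,
        (X (⟨1, by omega⟩ : Fin n) : MvPolynomial (Fin n) D) ^ 4} = I * J ∧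
      I ≠ ⊤ ∧ J ≠ ⊤ := by
  have h2' : IsUnit (2 : MvPolynomial (Fin n) D) := by
    rw [← map_ofNat C 2]; exact h2.map C
  have hfactor := Ideal.span_quartic_eq_span_mul_span h2'
    (X (⟨0, by omega⟩ : Fin n) : MvPolynomial (Fin n) D) (X ⟨1, by omega⟩)
  exact ⟨hfactor, _, _, hfactor,
    Ideal.span_ne_top_of_forall_map_eq_zero constantCoeff (by simp),
    Ideal.span_ne_top_of_forall_map_eq_zero constantCoeff (by simp)⟩
end

section
/- Let R be a noetherian commutative ring and for a proper ideal I define ω′(I) ∈ ℕ₀ ∪ {∞} as the smallest N such that whenever J₁ ⋯ J_n ⊆ I for ideals J₁, …, J_n, there is a subset Ω ⊆ {1,…,n} with |Ω| ≤ N and ∏_{λ∈Ω} J_λ ⊆ I. If J is an ideal with I ⊆ J and J/I isomorphic as an R-module to R/P for some prime ideal P, then ω′(I) ≤ ω′(J) + 1. -/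
open scoped BigOperators

/-- The invariant `ω′(I) ∈ ℕ₀ ∪ {∞}`: the smallest `N` such that whenever a finite
product of ideals `J₁ ⋯ J_n` is contained in `I`, there is a subset `Ω` of the indices
with `|Ω| ≤ N` and `∏_{λ ∈ Ω} J_λ ⊆ I`. -/
noncomputable def omega' {R : Type*} [CommRing R] (I : Ideal R) : ℕ∞ :=
  sInf {N : ℕ∞ | ∀ (n : ℕ) (J : Fin n → Ideal R), (∏ i, J i) ≤ I →
    ∃ Ω : Finset (Fin n), (Ω.card : ℕ∞) ≤ N ∧ (∏ i ∈ Ω, J i) ≤ I}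

/-!
If `J/I ≅ R/P`, then `P` kills `J/I`, so `P J ⊆ I`, and `P` is exactly the annihilator of every
`r ∈ J \ I`. Given `J₁ ⋯ J_n ⊆ I ⊆ J`, pick `Ω` with `|Ω| ≤ ω′(J)` and `∏_Ω J_λ ⊆ J`. Either
already `∏_Ω J_λ ⊆ I`, or some `r ∈ ∏_Ω J_λ` lies outside `I`; then `∏_{λ ∉ Ω} J_λ` annihilates
`r` modulo `I`, hence lies in the prime `P`, so a single factor `J_l ⊆ P` and
`J_l ∏_Ω J_λ ⊆ P J ⊆ I`.
-/

section

variable {R : Type*} [CommRing R]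

theorem exists_card_le_omega'_prod_le {I : Ideal R} {n : ℕ} {K : Fin n → Ideal R}
    (hK : ∏ i, K i ≤ I) : ∃ Ω : Finset (Fin n), (Ω.card : ℕ∞) ≤ omega' I ∧ ∏ i ∈ Ω, K i ≤ I :=
  csInf_mem (s := {N : ℕ∞ | ∀ (n : ℕ) (K : Fin n → Ideal R), ∏ i, K i ≤ I →
    ∃ Ω : Finset (Fin n), (Ω.card : ℕ∞) ≤ N ∧ ∏ i ∈ Ω, K i ≤ I})
    ⟨⊤, fun _ _ h => ⟨Finset.univ, le_top, h⟩⟩ n K hK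

section LinearEquivQuotient

variable {M : Type*} [AddCommGroup M] [Module R M] {P : Ideal R}

theorem annihilator_eq_of_linearEquiv_quotient (e : M ≃ₗ[R] R ⧸ P) :
    Module.annihilator R M = P := by
  rw [e.annihilator_eq, Ideal.annihilator_quotient]

theorem mem_of_smul_eq_zero_of_linearEquiv_quotient [P.IsPrime] (e : M ≃ₗ[R] R ⧸ P)
    {m : M} (hm : m ≠ 0) {s : R} (hs : s • m = 0) : s ∈ P := by
  have hem : e m ≠ 0 := by simpa using hm
  have : algebraMap R (R ⧸ P) s * e m = 0 := by rw [← Algebra.smul_def, ← map_smul, hs, map_zero]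
  exact Ideal.Quotient.eq_zero_iff_mem.mp ((mul_eq_zero.mp this).resolve_right hem)

end LinearEquivQuotient

section IdealQuotient

variable {I J P : Ideal R}

theorem Ideal.mk_comap_subtype_eq_zero_iff {r : R} (hr : r ∈ J) :
    Submodule.Quotient.mk (p := Submodule.comap J.subtype I) (⟨r, hr⟩ : J) = 0 ↔ r ∈ I :=
  Submodule.Quotient.mk_eq_zero _

theorem Ideal.mul_le_of_linearEquiv_quotient (e : (J ⧸ Submodule.comap J.subtype I) ≃ₗ[R] R ⧸ P) :
    P * J ≤ I := by
  refine Ideal.mul_le.mpr fun s hs r hr => ?_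
  rw [← annihilator_eq_of_linearEquiv_quotient e, Module.mem_annihilator] at hs
  exact (Ideal.mk_comap_subtype_eq_zero_iff (I := I) (mul_mem_left J s hr)).mp
    (hs (Submodule.Quotient.mk ⟨r, hr⟩))

theorem Ideal.mem_of_mul_mem_of_linearEquiv_quotient [P.IsPrime]
    (e : (J ⧸ Submodule.comap J.subtype I) ≃ₗ[R] R ⧸ P) {r : R} (hrJ : r ∈ J) (hrI : r ∉ I) {s : R}
    (hs : s * r ∈ I) : s ∈ P :=
  mem_of_smul_eq_zero_of_linearEquiv_quotient e (mt (Ideal.mk_comap_subtype_eq_zero_iff hrJ).mp hrI)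
    ((Ideal.mk_comap_subtype_eq_zero_iff (mul_mem_left J s hrJ)).mpr hs)

end IdealQuotient

theorem Ideal.exists_notMem_le_of_prod_le {ι : Type*} [Fintype ι] [DecidableEq ι]
    {I P : Ideal R} (hP : P.IsPrime) {K : ι → Ideal R} (hK : ∏ i, K i ≤ I) {Ω : Finset ι}
    {r : R} (hr : r ∈ ∏ i ∈ Ω, K i) (hrP : ∀ s, s * r ∈ I → s ∈ P) :
    ∃ l ∉ Ω, K l ≤ P := by
  have hcompl : ∏ i ∈ Ωᶜ, K i ≤ P := fun s hs => hrP s <| hK <| by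
    rw [← Finset.prod_mul_prod_compl Ω, mul_comm]
    exact Ideal.mul_mem_mul hs hr
  obtain ⟨l, hl, hlP⟩ := hP.prod_le.mp hcompl
  exact ⟨l, Finset.mem_compl.mp hl, hlP⟩

end

theorem omega'_le_succ_general {R : Type*} [CommRing R]
    (I J : Ideal R) (hIJ : I ≤ J) (P : Ideal R) (hP : P.IsPrime)
    (e : Nonempty ((↥J ⧸ (Submodule.comap J.subtype I)) ≃ₗ[R] (R ⧸ P))) :
    omega' I ≤ omega' J + 1 := by
  classical
  obtain ⟨e⟩ := e
  have := hP
  refine sInf_le fun n K hK => ?_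
  obtain ⟨Ω, hcard, hΩJ⟩ := exists_card_le_omega'_prod_le (hK.trans hIJ)
  by_cases hΩI : ∏ i ∈ Ω, K i ≤ I
  · exact ⟨Ω, hcard.trans le_self_add, hΩI⟩
  obtain ⟨r, hrΩ, hrI⟩ := SetLike.not_le_iff_exists.mp hΩI
  obtain ⟨l, hlΩ, hlP⟩ := Ideal.exists_notMem_le_of_prod_le hP hK hrΩ fun s hs =>
    Ideal.mem_of_mul_mem_of_linearEquiv_quotient e (hΩJ hrΩ) hrI hs
  refine ⟨insert l Ω, ?_, ?_⟩
  · rw [Finset.card_insert_of_notMem hlΩ, Nat.cast_succ]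
    exact add_le_add_left hcard 1
  · rw [Finset.prod_insert hlΩ]
    exact (Ideal.mul_mono hlP hΩJ).trans (Ideal.mul_le_of_linearEquiv_quotient e)

/-- Let `R` be a noetherian commutative ring, `I` a proper ideal, and `J ⊇ I` an ideal
with `J/I` isomorphic as an `R`-module to `R/P` for a prime ideal `P`.
Then `ω′(I) ≤ ω′(J) + 1`. -/
theorem omega'_le_succ {R : Type*} [CommRing R] [IsNoetherianRing R]
    (I J : Ideal R) (hI : I ≠ ⊤) (hIJ : I ≤ J) (P : Ideal R) (hP : P.IsPrime)
    (e : Nonempty ((↥J ⧸ (Submodule.comap J.subtype I)) ≃ₗ[R] (R ⧸ P))) :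
    omega' I ≤ omega' J + 1 :=
  omega'_le_succ_general I J hIJ P hP e
end
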